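/- Let n ≥ 4 be even. If G is an (n−3)-regular graph on n vertices that is (a,d)-distance antimagic for some a and d ≥ 1, then d = 1. -/

import Mathlib

open scoped Classical
open Finset

/-- Weight of a vertex: sum of labels over its open neighborhood. -/
noncomputable def wsum {V : Type*} [Fintype V] (G : SimpleGraph V) (f : V → ℕ) (u : V) : ℕ :=
  ∑ v ∈ Finset.univ.filter (fun v => G.Adj u v), f v

/-- A graph is distance magic if some bijective labeling by 1,...,n has constant weights. -/
def IsDistanceMagic {V : Type*} [Fintype V] (G : SimpleGraph V) : Prop :=
  ∃ (f : V ≃ Fin (Fintype.card V)) (c : ℕ),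
    ∀ u, wsum G (fun v => (f v : ℕ) + 1) u = c

/-- `G` is `r`-regular. -/
def IsRegularDeg {V : Type*} [Fintype V] (G : SimpleGraph V) (r : ℕ) : Prop :=
  ∀ u : V, (Finset.univ.filter (fun v => G.Adj u v)).card = r

/-- `(a,d)`-distance antimagic: some bijective labeling by 1,...,n has weight set
`{a, a+d, ..., a+(n-1)d}`. -/
def IsDistAntimagic {V : Type*} [Fintype V] (G : SimpleGraph V) (a d : ℕ) : Prop :=
  ∃ f : V ≃ Fin (Fintype.card V),
    Finset.image (fun u => wsum G (fun v => (f v : ℕ) + 1) u) Finset.univ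
      = Finset.image (fun i : Fin (Fintype.card V) => a + (i : ℕ) * d) Finset.univ

/-- Circulant graph on `N` vertices with jumps `1,...,m` (so `H_{2m,N} = C_N^m`). -/
def circulant (N m : ℕ) : SimpleGraph (Fin N) :=
  SimpleGraph.fromRel (fun i j => ∃ k, 1 ≤ k ∧ k ≤ m ∧ ((i : ℕ) + k) % N = (j : ℕ))

/-- The graph `(K_{n-1} - M) + K_1`: vertex `0` joined to all, and vertices `1,...,n-1`
forming a complete graph minus the perfect matching pairing `i` with `i + (n-1)/2 (mod n-1)`. -/
def calG (n : ℕ) : SimpleGraph (Fin n) :=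
  SimpleGraph.fromRel (fun i j =>
    (i : ℕ) = 0 ∨ (j : ℕ) = 0 ∨
      ¬ (((i : ℕ) - 1 + (n - 1) / 2) % (n - 1) = (j : ℕ) - 1))

/-- Lexicographic product `G ∘ H`. -/
def lexProd {α β : Type*} (G : SimpleGraph α) (H : SimpleGraph β) : SimpleGraph (α × β) where
  Adj x y := G.Adj x.1 y.1 ∨ (x.1 = y.1 ∧ H.Adj x.2 y.2)
  symm := by
    refine ⟨?_⟩
    rintro ⟨a, b⟩ ⟨c, d⟩ (h | ⟨h1, h2⟩)
    · exact Or.inl h.symm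
    · exact Or.inr ⟨h1.symm, h2.symm⟩
  loopless := by
    refine ⟨?_⟩
    rintro ⟨a, b⟩ (h | ⟨-, h⟩)
    · exact G.irrefl h
    · exact H.irrefl h

/-- Direct (tensor) product `G × H`. -/
def tensorProd {α β : Type*} (G : SimpleGraph α) (H : SimpleGraph β) : SimpleGraph (α × β) where
  Adj x y := G.Adj x.1 y.1 ∧ H.Adj x.2 y.2
  symm := ⟨fun _ _ h => ⟨h.1.symm, h.2.symm⟩⟩
  loopless := ⟨fun x h => G.irrefl h.1⟩

/-- The Harary graph `H_{3,n}`. -/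
noncomputable def harary3 (n : ℕ) : SimpleGraph (Fin n) :=
  circulant n 1 ⊔ SimpleGraph.fromRel (fun i j =>
    if n % 2 = 0 then
      ∃ k, 1 ≤ k ∧ k ≤ n / 2 ∧ (i : ℕ) = k ∧ (j : ℕ) = (k + n / 2) % n
    else
      ((i : ℕ) = 0 ∧ ((j : ℕ) = (n - 1) / 2 ∨ (j : ℕ) = (n + 1) / 2)) ∨
      (∃ k, 1 ≤ k ∧ k < (n - 1) / 2 ∧ (i : ℕ) = k ∧ (j : ℕ) = (k + (n + 1) / 2) % n))

/-- The Harary graph `H_{2n+1,2n+3}`: `C_{2n+3}^n` together with edges `v_0 v_{n+1}`,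
`v_0 v_{n+2}` and `v_i v_{i+n+2}` for `1 ≤ i < n+1`. -/
def hararyOdd (n : ℕ) : SimpleGraph (Fin (2 * n + 3)) :=
  circulant (2 * n + 3) n ⊔ SimpleGraph.fromRel (fun i j =>
    ((i : ℕ) = 0 ∧ ((j : ℕ) = n + 1 ∨ (j : ℕ) = n + 2)) ∨
    (∃ k, 1 ≤ k ∧ k < n + 1 ∧ (i : ℕ) = k ∧ (j : ℕ) = k + n + 2))

/-- The Harary graph `H_{4n+1,4n+4}`: circulant with jumps `1,...,2n` and `2n+2`. -/
def harary41 (n : ℕ) : SimpleGraph (Fin (4 * n + 4)) :=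
  SimpleGraph.fromRel (fun i j =>
    ∃ k, ((1 ≤ k ∧ k ≤ 2 * n) ∨ k = 2 * n + 2) ∧ ((i : ℕ) + k) % (4 * n + 4) = (j : ℕ))

/-- The join `G + K_1`. -/
def joinK1 {V : Type*} (G : SimpleGraph V) : SimpleGraph (V ⊕ Unit) :=
  SimpleGraph.fromRel (fun x y =>
    match x, y with
    | Sum.inl a, Sum.inl b => G.Adj a b
    | Sum.inl _, Sum.inr _ => True
    | Sum.inr _, _ => False)


/-!
Let `S = n(n+1)/2` be the sum of all labels. Every vertex has exactly three non-neighbours,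
which carry three distinct labels from `1, …, n`, so every weight lies in `[S - (3n-3), S - 6]`.
The progression `a, …, a + (n-1)d` thus spans at most `3n - 9 < 3(n-1)`, whence `d ≤ 2`.
Counting each label once per neighbour, the weights sum to `(n-3)S = na + d n(n-1)/2`, that is
`(n-3)(n+1) = 2a + (n-1)d`; for even `n` the left side is odd, so `d` is odd.
-/

theorem Finset.sum_eq_sum_of_image_univ_eq {ι κ M : Type*} [Fintype ι] [Fintype κ]
    [AddCommMonoid M] [DecidableEq M] {w : ι → M} {p : κ → M} (hp : Function.Injective p)
    (hcard : Fintype.card ι = Fintype.card κ) (h : univ.image w = univ.image p) :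
    ∑ i, w i = ∑ k, p k := by
  have hw : Set.InjOn w (univ : Finset ι) := by
    rw [← card_image_iff, h, card_image_of_injective _ hp, card_univ, card_univ, hcard]
  calc ∑ i, w i = ∑ m ∈ univ.image w, m := (sum_image (f := fun m => m) hw).symm
    _ = ∑ m ∈ univ.image p, m := by rw [h]
    _ = ∑ k, p k := sum_image fun _ _ _ _ hkl => hp hkl

theorem arithProg_injective (a : ℕ) {d : ℕ} (hd : 1 ≤ d) (n : ℕ) :
    Function.Injective fun i : Fin n => a + (i : ℕ) * d := fun _ _ hij =>
  Fin.ext (Nat.eq_of_mul_eq_mul_right hd (Nat.add_left_cancel hij))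

theorem two_mul_sum_arithProg (n a d : ℕ) :
    2 * ∑ i : Fin n, (a + (i : ℕ) * d) = n * (2 * a + (n - 1) * d) := by
  rw [Fin.sum_univ_eq_sum_range (fun i => a + i * d), sum_add_distrib, ← sum_mul, sum_const,
    card_range, smul_eq_mul, mul_add, ← mul_assoc 2 (∑ i ∈ range n, i),
    mul_comm 2 (∑ i ∈ range n, i), sum_range_id_mul_two]
  ring

theorem sum_label_mul_two {V : Type*} [Fintype V] {n : ℕ} (f : V ≃ Fin n) :
    (∑ v, ((f v : ℕ) + 1)) * 2 = n * (n + 1) := by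
  rw [Fintype.sum_equiv f _ (fun i : Fin n => (i : ℕ) + 1) fun _ => rfl,
    Fin.sum_univ_eq_sum_range (· + 1), ← add_zero (∑ i ∈ range n, (i + 1)),
    ← sum_range_succ' (fun i => i) n, sum_range_id_mul_two, Nat.add_sub_cancel, mul_comm]

theorem six_le_sum_three_labels_le {V : Type*} {n : ℕ} (f : V ≃ Fin n) {s : Finset V}
    (hs : s.card = 3) : 6 ≤ ∑ v ∈ s, ((f v : ℕ) + 1) ∧ ∑ v ∈ s, ((f v : ℕ) + 1) ≤ 3 * n - 3 := by
  obtain ⟨x, y, z, hxy, hxz, hyz, rfl⟩ := card_eq_three.mp hs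
  rw [sum_insert (by simp [hxy, hxz]), sum_pair hyz]
  have : (f x : ℕ) ≠ f y := fun h => hxy (f.injective (Fin.ext h))
  have : (f x : ℕ) ≠ f z := fun h => hxz (f.injective (Fin.ext h))
  have : (f y : ℕ) ≠ f z := fun h => hyz (f.injective (Fin.ext h))
  have := (f x).isLt; have := (f y).isLt; have := (f z).isLt
  omega

theorem odd_of_sub_three_mul_add_one_eq {n a d : ℕ} (hn : 3 ≤ n) (heven : Even n)
    (h : (n - 3) * (n + 1) = 2 * a + (n - 1) * d) : Odd d := by
  obtain ⟨m, rfl⟩ := heven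
  have hodd : Odd ((m + m - 3) * (m + m + 1)) :=
    Nat.odd_mul.mpr ⟨⟨m - 2, by omega⟩, ⟨m, by omega⟩⟩
  rw [h, Nat.odd_add', Nat.odd_mul] at hodd
  exact (hodd.mpr (even_two_mul a)).2

section Weights

variable {V : Type*} [Fintype V] {G : SimpleGraph V}

theorem card_nonadj_of_isRegularDeg {r : ℕ} (hreg : IsRegularDeg G r) (u : V) :
    (univ.filter fun v => ¬ G.Adj u v).card = Fintype.card V - r := by
  have := card_filter_add_card_filter_not (s := (univ : Finset V)) (p := fun v => G.Adj u v)
  rw [hreg u, card_univ] at this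
  omega

theorem sum_wsum_of_isRegularDeg {r : ℕ} (hreg : IsRegularDeg G r) (f : V → ℕ) :
    ∑ u, wsum G f u = r * ∑ v, f v := by
  calc ∑ u, wsum G f u = ∑ u, ∑ v, if G.Adj u v then f v else 0 := by
        simp only [wsum, sum_filter]
    _ = ∑ v, ∑ u, if G.Adj v u then f v else 0 := by
        rw [sum_comm]; simp only [G.adj_comm]
    _ = ∑ v, r * f v := by
        refine sum_congr rfl fun v _ => ?_
        rw [← sum_filter, sum_const, hreg v, smul_eq_mul]
    _ = r * ∑ v, f v := (mul_sum _ _ _).symm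

theorem IsRegularDeg.mul_card_add_one_eq {r a d : ℕ} (hreg : IsRegularDeg G r) (hd : 1 ≤ d)
    (hpos : 0 < Fintype.card V) (f : V ≃ Fin (Fintype.card V))
    (hf : univ.image (fun u => wsum G (fun v => (f v : ℕ) + 1) u) =
      univ.image fun i : Fin (Fintype.card V) => a + (i : ℕ) * d) :
    r * (Fintype.card V + 1) = 2 * a + (Fintype.card V - 1) * d := by
  refine Nat.eq_of_mul_eq_mul_left hpos ?_
  rw [← two_mul_sum_arithProg, ← sum_eq_sum_of_image_univ_eq (arithProg_injective a hd _)
    (Fintype.card_fin _).symm hf, sum_wsum_of_isRegularDeg hreg, mul_left_comm, mul_comm 2,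
    mul_assoc, sum_label_mul_two f]

theorem wsum_le_wsum_add_of_isRegularDeg (hcard : 3 ≤ Fintype.card V)
    (hreg : IsRegularDeg G (Fintype.card V - 3)) (f : V ≃ Fin (Fintype.card V)) (u w : V) :
    wsum G (fun v => (f v : ℕ) + 1) w ≤
      wsum G (fun v => (f v : ℕ) + 1) u + (3 * Fintype.card V - 9) := by
  have hthree (x : V) := six_le_sum_three_labels_le f
    ((card_nonadj_of_isRegularDeg hreg x).trans (by omega))
  have hsplit (x : V) : wsum G (fun v => (f v : ℕ) + 1) x +
      ∑ v ∈ univ.filter (fun v => ¬ G.Adj x v), ((f v : ℕ) + 1) = ∑ v, ((f v : ℕ) + 1) :=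
    sum_filter_add_sum_filter_not univ _ _
  have := hthree u; have := hthree w; have := hsplit u; have := hsplit w
  omega

end Weights

/-- for n ≥ 4 even, an (n-3)-regular (a,d)-distance antimagic graph on n
vertices (d ≥ 1) has d = 1. -/
theorem regular_antimagic_d_eq_one {V : Type*} [Fintype V] (n : ℕ) (hn : 4 ≤ n)
    (heven : Even n) (hV : Fintype.card V = n) (G : SimpleGraph V)
    (hreg : IsRegularDeg G (n - 3)) (a d : ℕ) (hd : 1 ≤ d)
    (h : IsDistAntimagic G a d) : d = 1 := by
  subst hV
  obtain ⟨f, hf⟩ := h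
  have hweight (i : Fin (Fintype.card V)) :
      ∃ u, wsum G (fun v => (f v : ℕ) + 1) u = a + i * d := by
    obtain ⟨u, -, hu⟩ := mem_image.mp (hf ▸ mem_image_of_mem _ (mem_univ i))
    exact ⟨u, hu⟩
  obtain ⟨u₀, hu₀⟩ := hweight ⟨0, by omega⟩
  obtain ⟨u₁, hu₁⟩ := hweight ⟨Fintype.card V - 1, by omega⟩
  have hspan : (Fintype.card V - 1) * d ≤ 3 * Fintype.card V - 9 := by
    have := wsum_le_wsum_add_of_isRegularDeg (by omega) hreg f u₀ u₁
    simp only [zero_mul, add_zero] at hu₀ hu₁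
    omega
  have hd_lt : d < 3 := Nat.lt_of_mul_lt_mul_left (a := Fintype.card V - 1) (by omega)
  obtain ⟨k, rfl⟩ := odd_of_sub_three_mul_add_one_eq (by omega) heven
    (hreg.mul_card_add_one_eq hd (by omega) f hf)
  omega
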